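/- For every n ≥ 2, the submonoid of the monoid of transformations of Q_n = {0,…,n−1} generated by the unitary transformations (q→q+1) and (q+1→q) for 0 ≤ q ≤ n−3, the unitary transformations (q→n−1) for 0 ≤ q ≤ n−2, the constant transformation sending every element to 0, and the identity, equals the set of nearly monotonic transformations, namely the union of the set of all partially monotonic transformations of Q_n with the set of all constant transformations of Q_n; moreover this set has cardinality e(n) + n − 1, where e(n) = Σ_{k=0}^{n−1} C(n−1, k)·C(n+k−2, k). -/

import Mathlib

/-- The unitary transformation `(p→q)`: sends `p` to `q` and fixes every other element. -/
def unitaryT {Q : Type*} [DecidableEq Q] (p q : Q) : Function.End Q :=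
  fun r => if r = p then q else r

/-- A transformation `t` of `Q_n = {0,…,n−1}` is partially monotonic if
`t(n−1) = n−1` and for all `p ≤ q` with `p, q < n−1`, if `t(p) < n−1` and
`t(q) < n−1` then `t(p) ≤ t(q)`. -/
def PartiallyMonotonic {n : ℕ} (f : Fin n → Fin n) : Prop :=
  (∀ q : Fin n, (q : ℕ) = n - 1 → f q = q) ∧
  ∀ p q : Fin n, p ≤ q → (p : ℕ) < n - 1 → (q : ℕ) < n - 1 →
    (f p : ℕ) < n - 1 → (f q : ℕ) < n - 1 → f p ≤ f q

/-- The set of nearly monotonic transformations: partially monotonic ones together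
with all constant transformations. -/
def NearlyMonotonicSet (n : ℕ) : Set (Function.End (Fin n)) :=
  {f | PartiallyMonotonic f} ∪ {f | ∃ c : Fin n, f = fun _ => c}

/-!
A partially monotonic transformation of `Fin (m + 1)` is a partial monotone map of `Fin m` that
sends the points where it is undefined to the sink `last m`. Such an `f` factors as a monotone
transformation of `Fin m` (extended by fixing `last m`) after the collapse onto `last m` of the
points that `f` sends there, which is a product of the generators `(q → last m)`. Monotone
transformations of a finite chain are products of the idempotents `(q → q ± 1)`: peel them off one
at a time, decreasing `∑ |f x - x|`. A constant `c` is `(x ↦ max x c) ∘ (const 0)`. In the other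
direction, partially monotonic maps are closed under composition and constants absorb everything,
so the generated submonoid is exactly the nearly monotonic set.

Counting partial monotone maps by their domain `S`, of size `k`, gives `multichoose m k` maps for
each `S` (shift `g i ↦ g i + i` to a `k`-subset of a chain of length `m + k - 1`), whence
`e(m + 1) = ∑ k, C(m, k) · multichoose m k`; the `m + 1` constants add `m` more, since the
constant map to `last m` is already partially monotonic.
-/

section DecidableEq

variable {α : Type*} [DecidableEq α]

lemma unitaryT_apply_self (p q : α) : unitaryT p q p = q := if_pos rfl

lemma unitaryT_apply_of_ne {p x : α} (q : α) (h : x ≠ p) : unitaryT p q x = x := if_neg h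

-- `Function.End α` is not reducible to `α → α`, so `simp` only sees through it after a `show`.
lemma unitaryT_self (p : α) : unitaryT p p = 1 :=
  funext fun x => show (if x = p then p else x) = x by split_ifs with h <;> simp [h]

def collapseTo (T : Finset α) (z : α) : Function.End α := fun x => if x ∈ T then z else x

lemma collapseTo_insert (a : α) (T : Finset α) (z : α) :
    collapseTo (insert a T) z = unitaryT a z * collapseTo T z :=
  funext fun x => show (if x ∈ insert a T then z else x) =
      unitaryT a z (if x ∈ T then z else x) by
    by_cases hT : x ∈ T
    · by_cases hz : z = a <;> simp [hT, unitaryT, hz]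
    · by_cases ha : x = a
      · subst ha; simp [hT, unitaryT]
      · simp [hT, ha, unitaryT]

theorem collapseTo_mem {M : Submonoid (Function.End α)} {T : Finset α} {z : α}
    (h : ∀ a ∈ T, unitaryT a z ∈ M) : collapseTo T z ∈ M := by
  induction T using Finset.induction_on with
  | empty => exact (funext fun x => rfl : (1 : Function.End α) = collapseTo ∅ z) ▸ M.one_mem
  | insert a T _ ih =>
    rw [collapseTo_insert]
    exact M.mul_mem (h a (Finset.mem_insert_self a T))
      (ih fun b hb => h b (Finset.mem_insert_of_mem hb))

end DecidableEq

section LinearOrder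

variable {α : Type*} [LinearOrder α]

lemma monotone_unitaryT {p q : α} (h : p ⋖ q ∨ q ⋖ p) : Monotone (unitaryT p q) := by
  intro x y hxy
  rcases eq_or_ne x p with rfl | hx <;> rcases eq_or_ne y x with rfl | hy
  · exact le_rfl
  · have hxy : x < y := lt_of_le_of_ne hxy hy.symm
    rw [unitaryT_apply_self, unitaryT_apply_of_ne _ hy]
    exact h.elim (·.ge_of_gt hxy) (·.lt.trans hxy |>.le)
  · exact le_rfl
  · rcases eq_or_ne y p with rfl | hyp
    · have hxy : x < y := lt_of_le_of_ne hxy hx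
      rw [unitaryT_apply_self, unitaryT_apply_of_ne _ hx]
      exact h.elim (hxy.trans ·.lt |>.le) (·.le_of_lt hxy)
    · rwa [unitaryT_apply_of_ne _ hx, unitaryT_apply_of_ne _ hyp]

lemma Monotone.unitaryT_comp_update_of_lt_apply {f : α → α} (hf : Monotone f) {i p : α}
    (hi : i < f i) (hbelow : ∀ x < i, f x ≤ x) (hp : p ⋖ f i) :
    Monotone (Function.update f i p) ∧ ∀ x, unitaryT p (f i) (Function.update f i p x) = f x := by
  have hip : i ≤ p := hp.le_of_lt hi
  have hlt : ∀ x < i, f x < p := fun x hx => ((hbelow x hx).trans_lt hx).trans_le hip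
  have hgt : ∀ x, i < x → p < f x := fun x hx => hp.lt.trans_le (hf hx.le)
  refine ⟨fun x y hxy => ?_, fun x => ?_⟩
  · rcases eq_or_ne x i with rfl | hx <;> rcases eq_or_ne y x with rfl | hy
    · exact le_rfl
    · rw [Function.update_self, Function.update_of_ne hy]
      exact (hgt y (lt_of_le_of_ne hxy hy.symm)).le
    · exact le_rfl
    · rcases eq_or_ne y i with rfl | hyi
      · rw [Function.update_self, Function.update_of_ne hx]
        exact (hlt x (lt_of_le_of_ne hxy hx)).le
      · rw [Function.update_of_ne hx, Function.update_of_ne hyi]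
        exact hf hxy
  · rcases eq_or_ne x i with rfl | hx
    · simp [unitaryT_apply_self]
    · rw [Function.update_of_ne hx]
      rcases hx.lt_or_gt with hx | hx
      · exact unitaryT_apply_of_ne _ (hlt x hx).ne
      · exact unitaryT_apply_of_ne _ (hgt x hx).ne'

lemma Monotone.unitaryT_comp_update_of_apply_lt {f : α → α} (hf : Monotone f) {i p : α}
    (hi : f i < i) (habove : ∀ x, i < x → x ≤ f x) (hp : f i ⋖ p) :
    Monotone (Function.update f i p) ∧ ∀ x, unitaryT p (f i) (Function.update f i p x) = f x :=
  have ⟨hmono, hfac⟩ :=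
    Monotone.unitaryT_comp_update_of_lt_apply (α := αᵒᵈ) hf.dual hi habove hp.toDual
  ⟨fun x y hxy => hmono (show OrderDual.toDual y ≤ OrderDual.toDual x from hxy), hfac⟩

end LinearOrder

def adjacentUnitaries (α : Type*) [LinearOrder α] : Set (Function.End α) :=
  {f | ∃ p q : α, (p ⋖ q ∨ q ⋖ p) ∧ f = unitaryT p q}

/-- Move the least point sent upwards, or else the greatest point sent downwards, one step back
towards itself. -/
theorem Fin.exists_adjacent_factor {m : ℕ} {f : Fin m → Fin m} (hf : Monotone f)
    (hne : ∃ x, f x ≠ x) :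
    ∃ i p : Fin m, (p ⋖ f i ∨ f i ⋖ p) ∧ ((p : ℤ) - i).natAbs < ((f i : ℤ) - i).natAbs ∧
      Monotone (Function.update f i p) ∧
      ∀ x, unitaryT p (f i) (Function.update f i p x) = f x := by
  by_cases hup : ∃ x, x < f x
  · obtain ⟨i, hi : i < f i, hmin⟩ := wellFounded_lt.has_min {x | x < f x} hup
    obtain ⟨p, hip, hp⟩ := exists_le_covBy_of_lt hi
    refine ⟨i, p, Or.inl hp, ?_,
      hf.unitaryT_comp_update_of_lt_apply hi (fun x hx => not_lt.1 fun h => hmin x h hx) hp⟩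
    have := Fin.lt_def.1 hp.lt
    have := Fin.le_def.1 hip
    omega
  · have hdown : ∃ x, f x < x :=
      hne.imp fun x hx => lt_of_le_of_ne (not_lt.1 fun h => hup ⟨x, h⟩) hx
    obtain ⟨i, hi : f i < i, hmax⟩ := wellFounded_gt.has_min {x | f x < x} hdown
    obtain ⟨p, hp, hpi⟩ := exists_covBy_le_of_lt hi
    refine ⟨i, p, Or.inr hp, ?_,
      hf.unitaryT_comp_update_of_apply_lt hi (fun x hx => not_lt.1 fun h => hmax x h hx) hp⟩
    have := Fin.lt_def.1 hp.lt
    have := Fin.le_def.1 hpi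
    omega

theorem Fin.mem_closure_adjacentUnitaries {m : ℕ} {f : Fin m → Fin m}
    (hf : Monotone f) : f ∈ Submonoid.closure (adjacentUnitaries (Fin m)) := by
  induction hD : ∑ x, ((f x : ℤ) - x).natAbs using Nat.strong_induction_on generalizing f with
  | _ D ih =>
  by_cases hne : ∃ x, f x ≠ x
  · obtain ⟨i, p, hadj, hlt, hmono, hfac⟩ := exists_adjacent_factor hf hne
    have hg : Function.update f i p ∈ Submonoid.closure (adjacentUnitaries (Fin m)) := by
      refine ih _ ?_ hmono rfl
      rw [← hD]
      refine Finset.sum_lt_sum (fun x _ => ?_) ⟨i, Finset.mem_univ _, by simpa using hlt⟩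
      rcases eq_or_ne x i with rfl | hx
      · simpa using hlt.le
      · rw [Function.update_of_ne hx]
    have hfg : unitaryT p (f i) * (show Function.End (Fin m) from Function.update f i p) = f :=
      funext hfac
    have h := (Submonoid.closure (adjacentUnitaries (Fin m))).mul_mem
      (Submonoid.subset_closure ⟨p, f i, hadj, rfl⟩) hg
    exact hfg ▸ h
  · push Not at hne
    have hf1 : (1 : Function.End (Fin m)) = f := funext fun x => (hne x).symm
    exact hf1 ▸ (Submonoid.closure (adjacentUnitaries (Fin m))).one_mem

namespace Fin

variable {m : ℕ}

def extendLast (f : Fin m → Fin m) : Fin (m + 1) → Fin (m + 1) :=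
  lastCases (last m) fun p => (f p).castSucc

@[simp] lemma extendLast_last (f : Fin m → Fin m) : extendLast f (last m) = last m :=
  lastCases_last

@[simp] lemma extendLast_castSucc (f : Fin m → Fin m) (p : Fin m) :
    extendLast f p.castSucc = (f p).castSucc :=
  lastCases_castSucc p

def extendLastHom : Function.End (Fin m) →* Function.End (Fin (m + 1)) where
  toFun := extendLast
  map_one' := funext fun x => show extendLast id x = x by cases x using lastCases <;> simp
  map_mul' (f g : Fin m → Fin m) := funext fun x =>
    show extendLast (f ∘ g) x = extendLast f (extendLast g x) by
      cases x using lastCases <;> simp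

lemma extendLast_unitaryT (p q : Fin m) :
    extendLast (unitaryT p q) = unitaryT p.castSucc q.castSucc := by
  funext x
  show extendLast (fun r => if r = p then q else r) x = if x = p.castSucc then q.castSucc else x
  cases x using lastCases with
  | last => simp [(castSucc_ne_last p).symm]
  | cast r => by_cases h : r = p <;> simp [h]

end Fin

section PartiallyMonotonic

open Fin

variable {m : ℕ}

theorem partiallyMonotonic_iff {f : Fin (m + 1) → Fin (m + 1)} :
    PartiallyMonotonic f ↔ f (last m) = last m ∧ MonotoneOn f {x | f x ≠ last m} := by
  have hlt : ∀ x : Fin (m + 1), (x : ℕ) < m + 1 - 1 ↔ x ≠ last m := fun x => by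
    rw [← lt_last_iff_ne_last, lt_def, val_last, Nat.add_sub_cancel]
  have heq : ∀ x : Fin (m + 1), (x : ℕ) = m + 1 - 1 ↔ x = last m := fun x => by
    rw [Fin.ext_iff, val_last, Nat.add_sub_cancel]
  simp only [PartiallyMonotonic, hlt, heq]
  refine ⟨fun ⟨hl, hmono⟩ => ⟨hl _ rfl, fun x hx y hy hxy => ?_⟩,
    fun ⟨hl, hmono⟩ => ⟨fun q hq => hq ▸ hl, fun p q hpq _ _ hp hq => hmono hp hq hpq⟩⟩
  have hne : ∀ {z}, f z ≠ last m → z ≠ last m := fun hz h => hz (by subst h; exact hl _ rfl)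
  exact hmono x y hxy (hne hx) (hne hy) hx hy

theorem partiallyMonotonic_of_monotone {f : Fin (m + 1) → Fin (m + 1)} (hf : Monotone f)
    (hlast : f (last m) = last m) : PartiallyMonotonic f :=
  partiallyMonotonic_iff.2 ⟨hlast, hf.monotoneOn _⟩

theorem PartiallyMonotonic.comp {f g : Fin (m + 1) → Fin (m + 1)} (hf : PartiallyMonotonic f)
    (hg : PartiallyMonotonic g) : PartiallyMonotonic (f ∘ g) := by
  rw [partiallyMonotonic_iff] at *
  refine ⟨by simp [hf.1, hg.1], fun x hx y hy hxy => ?_⟩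
  have hne : ∀ {z}, f (g z) ≠ last m → g z ≠ last m := fun hz h => hz (h ▸ hf.1)
  exact hf.2 hx hy (hg.2 (hne hx) (hne hy) hxy)

theorem partiallyMonotonic_unitaryT_last (p : Fin (m + 1)) :
    PartiallyMonotonic (unitaryT p (last m)) := by
  refine partiallyMonotonic_iff.2 ⟨?_, fun x hx y hy hxy => ?_⟩
  · by_cases h : last m = p
    · rw [h, unitaryT_apply_self]
    · exact unitaryT_apply_of_ne _ h
  · have hne : ∀ {z}, unitaryT p (last m) z ≠ last m → z ≠ p := fun hz h =>
      hz (h ▸ unitaryT_apply_self _ _)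
    simpa [unitaryT_apply_of_ne _ (hne hx), unitaryT_apply_of_ne _ (hne hy)] using hxy

end PartiallyMonotonic

theorem Monotone.exists_monotone_extension {α β : Type*} [Preorder α] [Finite α]
    [SemilatticeSup β] [OrderBot β] {s : Set α} {g : s → β} (hg : Monotone g) :
    ∃ h : α → β, Monotone h ∧ ∀ x : s, h x = g x := by
  classical
  have := Fintype.ofFinite α
  refine ⟨fun x => (Finset.univ.filter fun y : s => (y : α) ≤ x).sup g,
    fun x x' hxx' => Finset.sup_mono (Finset.monotone_filter_right _ fun y _ hy => hy.trans hxx'),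
    fun x => le_antisymm (Finset.sup_le fun y hy => hg (Finset.mem_filter.1 hy).2) ?_⟩
  exact Finset.le_sup (f := g) (Finset.mem_filter.2 ⟨Finset.mem_univ _, le_rfl⟩)

section Generation

open Fin

variable {m : ℕ}

theorem Fin.extendLast_mem {M : Submonoid (Function.End (Fin (m + 1)))}
    (hadj : ∀ p q : Fin m, p ⋖ q ∨ q ⋖ p → unitaryT p.castSucc q.castSucc ∈ M)
    {h : Fin m → Fin m} (hh : Monotone h) : extendLast h ∈ M := by
  have hle : (Submonoid.closure (adjacentUnitaries (Fin m))).map extendLastHom ≤ M := by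
    rw [MonoidHom.map_mclosure, Submonoid.closure_le]
    rintro _ ⟨_, ⟨p, q, hpq, rfl⟩, rfl⟩
    change extendLast (unitaryT p q) ∈ M
    rw [extendLast_unitaryT]
    exact hadj p q hpq
  exact hle (Submonoid.mem_map_of_mem _ (mem_closure_adjacentUnitaries hh))

/-- A partially monotonic `f` factors as `extendLast h ∘ collapseTo T (last m)`, where `T` is the
set of points that `f` sends to `last m` and `h` is a monotone extension of the rest of `f`. -/
theorem PartiallyMonotonic.mem_submonoid [NeZero m] {M : Submonoid (Function.End (Fin (m + 1)))}
    (hadj : ∀ p q : Fin m, p ⋖ q ∨ q ⋖ p → unitaryT p.castSucc q.castSucc ∈ M)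
    (hlast : ∀ p : Fin m, unitaryT p.castSucc (last m) ∈ M)
    {f : Fin (m + 1) → Fin (m + 1)} (hf : PartiallyMonotonic f) : f ∈ M := by
  rw [partiallyMonotonic_iff] at hf
  obtain ⟨h, hh, hext⟩ := Monotone.exists_monotone_extension
    (s := {p : Fin m | f p.castSucc ≠ last m}) (g := fun p => (f p.1.castSucc).castPred p.2)
    fun p q hpq => castPred_le_castPred_iff.2 (hf.2 p.2 q.2 (castSucc_le_castSucc_iff.2 hpq))
  set T := Finset.univ.filter fun x => f x = last m
  have hT : collapseTo T (last m) ∈ M := collapseTo_mem fun a _ => by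
    cases a using lastCases with
    | last => exact (unitaryT_self (last m)).symm ▸ M.one_mem
    | cast p => exact hlast p
  have hfac : (show Function.End (Fin (m + 1)) from extendLast h) * collapseTo T (last m) = f :=
    funext fun x => by
      show extendLast h (if x ∈ T then last m else x) = f x
      by_cases hx : f x = last m
      · simp [T, hx]
      · cases x using lastCases with
        | last => exact absurd hf.1 hx
        | cast p => simp [T, hx, hext ⟨p, hx⟩]
  exact hfac ▸ M.mul_mem (Fin.extendLast_mem hadj hh) hT

end Generation

section Closure

open Fin

def nearlyMonotonicGenerators (m : ℕ) : Set (Function.End (Fin (m + 1))) :=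
  {f | ∃ p q : Fin (m + 1), (q : ℕ) = (p : ℕ) + 1 ∧ (q : ℕ) < m ∧
      (f = unitaryT p q ∨ f = unitaryT q p)} ∪
    {f | ∃ p r : Fin (m + 1), (p : ℕ) < m ∧ (r : ℕ) = m ∧ f = unitaryT p r} ∪
    {fun _ => ⟨0, m.succ_pos⟩}

def nearlyMonotonicSubmonoid (m : ℕ) : Submonoid (Function.End (Fin (m + 1))) where
  carrier := NearlyMonotonicSet (m + 1)
  mul_mem' := by
    rintro f g (hf | ⟨c, rfl⟩) (hg | ⟨d, rfl⟩)
    · exact Or.inl (hf.comp hg)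
    · exact Or.inr ⟨f d, rfl⟩
    · exact Or.inr ⟨c, rfl⟩
    · exact Or.inr ⟨c, rfl⟩
  one_mem' := Or.inl (partiallyMonotonic_of_monotone monotone_id rfl)

theorem closure_nearlyMonotonicGenerators {m : ℕ} [NeZero m] :
    (Submonoid.closure (nearlyMonotonicGenerators m) : Set (Function.End (Fin (m + 1)))) =
      NearlyMonotonicSet (m + 1) := by
  have hcov : ∀ {p q : Fin (m + 1)}, (q : ℕ) = p + 1 → p ⋖ q := fun h =>
    covBy_iff.2 (Nat.covBy_iff_add_one_eq.2 h.symm)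
  refine Set.Subset.antisymm
    (Submonoid.closure_le (S := nearlyMonotonicSubmonoid m).2 ?_) ?_
  · have hlast : ∀ {p q : Fin (m + 1)}, (p : ℕ) < m → unitaryT p q (last m) = last m :=
      fun hp => unitaryT_apply_of_ne _ fun h => by rw [← h, val_last] at hp; exact lt_irrefl _ hp
    rintro f ((⟨p, q, hq, hqm, rfl | rfl⟩ | ⟨p, r, hp, hr, rfl⟩) | rfl)
    · exact Or.inl (partiallyMonotonic_of_monotone (monotone_unitaryT (.inl (hcov hq)))
        (hlast (by omega)))
    · exact Or.inl (partiallyMonotonic_of_monotone (monotone_unitaryT (.inr (hcov hq)))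
        (hlast hqm))
    · obtain rfl : r = last m := Fin.ext hr
      exact Or.inl (partiallyMonotonic_unitaryT_last p)
    · exact Or.inr ⟨_, rfl⟩
  · have hpm : ∀ f, PartiallyMonotonic f → f ∈ Submonoid.closure (nearlyMonotonicGenerators m) := by
      refine fun f hf => hf.mem_submonoid (fun p q hpq => Submonoid.subset_closure ?_)
        fun p => Submonoid.subset_closure (Or.inl (Or.inr ⟨p.castSucc, last m, p.2, rfl, rfl⟩))
      rcases hpq with hpq | hpq <;> have := Nat.covBy_iff_add_one_eq.1 (covBy_iff.1 hpq)
      · exact Or.inl (Or.inl ⟨p.castSucc, q.castSucc, this.symm, q.2, Or.inl rfl⟩)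
      · exact Or.inl (Or.inl ⟨q.castSucc, p.castSucc, this.symm, p.2, Or.inr rfl⟩)
    rintro f (hf | ⟨c, rfl⟩)
    · exact hpm f hf
    · have hmax : PartiallyMonotonic fun x => max x c :=
        partiallyMonotonic_of_monotone (monotone_id.max monotone_const) (max_eq_left (le_last c))
      have hc : (show Function.End (Fin (m + 1)) from fun x => max x c) *
          (show Function.End (Fin (m + 1)) from fun _ => ⟨0, m.succ_pos⟩) = fun _ => c :=
        funext fun _ => max_eq_right (Fin.zero_le _)
      exact hc ▸ Submonoid.mul_mem _ (hpm _ hmax) (Submonoid.subset_closure (Or.inr rfl))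

end Closure

theorem Fin.sub_le_sub_of_strictMono {j N : ℕ} {v : Fin j → Fin N} (hv : StrictMono v)
    {a b : Fin j} (hab : a ≤ b) : (b : ℕ) - a ≤ (v b : ℕ) - v a := by
  have hcard := Finset.card_le_card_of_injOn v (s := Finset.Icc a b) (t := Finset.Icc (v a) (v b))
    (fun x hx => by
      simp only [Finset.coe_Icc, Set.mem_Icc] at hx ⊢
      exact ⟨hv.monotone hx.1, hv.monotone hx.2⟩) hv.injective.injOn
  simp only [Fin.card_Icc] at hcard
  have := Fin.le_def.1 (hv.monotone hab)
  omega

theorem Fin.le_val_of_strictMono {j N : ℕ} {v : Fin j → Fin N} (hv : StrictMono v) (i : Fin j) :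
    (i : ℕ) ≤ v i := by
  have := Fin.sub_le_sub_of_strictMono hv (a := ⟨0, i.pos⟩) (b := i) (Nat.zero_le _)
  simp only at this
  omega

theorem Fin.val_add_le_of_strictMono {j N : ℕ} {v : Fin j → Fin N} (hv : StrictMono v)
    (i : Fin j) : (v i : ℕ) + (j - i) ≤ N := by
  have hi := i.2
  have := Fin.sub_le_sub_of_strictMono hv (a := i) (b := ⟨j - 1, by omega⟩)
    (Fin.le_def.2 (by simp only; omega))
  have := (v ⟨j - 1, by omega⟩).2
  simp only at *
  omega

def Fin.orderHomEquivOrderEmbedding (j m : ℕ) : (Fin j →o Fin m) ≃ (Fin j ↪o Fin (m + j - 1)) where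
  toFun g := OrderEmbedding.ofStrictMono
    (fun i => ⟨(g i : ℕ) + i, by have := (g i).2; have := i.2; omega⟩) fun a b hab => by
      have := Fin.le_def.1 (g.monotone hab.le)
      exact Fin.lt_def.2 (by simp only; have := Fin.lt_def.1 hab; omega)
  invFun v := ⟨fun i => ⟨(v i : ℕ) - i, by
      have : (i : ℕ) ≤ v i := Fin.le_val_of_strictMono v.strictMono i
      have : (v i : ℕ) + (j - i) ≤ m + j - 1 := Fin.val_add_le_of_strictMono v.strictMono i
      omega⟩, fun a b hab => by
      have : (b : ℕ) - a ≤ (v b : ℕ) - v a := Fin.sub_le_sub_of_strictMono v.strictMono hab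
      have : (a : ℕ) ≤ v a := Fin.le_val_of_strictMono v.strictMono a
      have : (v a : ℕ) ≤ v b := v.monotone hab
      exact Fin.le_def.2 (by simp only; omega)⟩
  left_inv g := by ext i; exact Nat.add_sub_cancel _ _
  right_inv v := by
    ext i
    have := Fin.le_val_of_strictMono v.strictMono i
    exact Nat.sub_add_cancel this

theorem Fin.card_orderHom (j m : ℕ) : Nat.card (Fin j →o Fin m) = m.multichoose j := by
  rw [Nat.card_congr ((orderHomEquivOrderEmbedding j m).trans Set.powersetCard.ofFinEmbEquiv),
    Set.powersetCard.card, Nat.card_fin, Nat.multichoose_eq]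

theorem Finset.card_orderHom_fin {α : Type*} [LinearOrder α] (S : Finset α) (m : ℕ) :
    Nat.card (S →o Fin m) = m.multichoose S.card := by
  rw [← Fin.card_orderHom,
    Nat.card_congr (OrderIso.arrowCongr (S.orderIsoOfFin rfl) (OrderIso.refl _)).toEquiv]

section PartialMaps

open Fin

variable {m : ℕ}

/-- A transformation of `Fin (m + 1)` fixing `last m` is read as a partial map on `Fin m` that is
undefined where it takes the value `last m`; this is its domain. -/
def Fin.partialDomain (f : Fin (m + 1) → Fin (m + 1)) : Finset (Fin m) :=
  Finset.univ.filter fun p => f p.castSucc ≠ last m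

@[simp] lemma Fin.mem_partialDomain {f : Fin (m + 1) → Fin (m + 1)} {p : Fin m} :
    p ∈ partialDomain f ↔ f p.castSucc ≠ last m := by
  simp [partialDomain]

lemma Fin.ne_last_of_partialDomain_eq {f : Fin (m + 1) → Fin (m + 1)} {S : Finset (Fin m)}
    (hS : partialDomain f = S) {p : Fin m} (hp : p ∈ S) : f p.castSucc ≠ last m :=
  mem_partialDomain.1 (hS ▸ hp)

def Fin.ofPartial (S : Finset (Fin m)) (g : S → Fin m) : Fin (m + 1) → Fin (m + 1) :=
  lastCases (last m) fun p => if hp : p ∈ S then (g ⟨p, hp⟩).castSucc else last m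

lemma Fin.partialDomain_ofPartial (S : Finset (Fin m)) (g : S → Fin m) :
    partialDomain (ofPartial S g) = S := by
  ext p
  by_cases hp : p ∈ S <;> simp [ofPartial, hp, castSucc_ne_last]

lemma Fin.partiallyMonotonic_ofPartial (S : Finset (Fin m)) {g : S → Fin m} (hg : Monotone g) :
    PartiallyMonotonic (ofPartial S g) := by
  refine partiallyMonotonic_iff.2 ⟨by simp [ofPartial], fun x hx y hy hxy => ?_⟩
  cases x using lastCases with
  | last => simp [ofPartial] at hx
  | cast p =>
    cases y using lastCases with
    | last => simp [ofPartial] at hy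
    | cast q =>
      by_cases hp : p ∈ S <;> by_cases hq : q ∈ S <;> simp [ofPartial, hp, hq] at hx hy ⊢
      exact hg (castSucc_le_castSucc_iff.1 hxy)

def partiallyMonotonicFiberEquiv (S : Finset (Fin m)) :
    {f : {f : Fin (m + 1) → Fin (m + 1) // PartiallyMonotonic f} // partialDomain f.1 = S} ≃
      (S →o Fin m) where
  toFun f := ⟨fun s => (f.1.1 s.1.castSucc).castPred (ne_last_of_partialDomain_eq f.2 s.2),
    fun s t hst => castPred_le_castPred_iff.2 ((partiallyMonotonic_iff.1 f.1.2).2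
      (ne_last_of_partialDomain_eq f.2 s.2) (ne_last_of_partialDomain_eq f.2 t.2)
      (castSucc_le_castSucc_iff.2 hst))⟩
  invFun g := ⟨⟨ofPartial S g, partiallyMonotonic_ofPartial S g.monotone⟩,
    partialDomain_ofPartial S g⟩
  left_inv := by
    rintro ⟨⟨f, hf⟩, rfl⟩
    refine Subtype.ext (Subtype.ext (funext fun x => ?_))
    cases x using lastCases with
    | last => simpa [ofPartial] using ((partiallyMonotonic_iff.1 hf).1).symm
    | cast p =>
      by_cases hp : f p.castSucc = last m
      · simp [ofPartial, hp]
      · simp only [ofPartial, lastCases_castSucc, mem_partialDomain]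
        rw [dif_pos hp]
        exact castSucc_castPred _ hp
  right_inv g := by
    ext s
    simp [ofPartial]

end PartialMaps

section Cardinality

open Fin

theorem ncard_partiallyMonotonic (m : ℕ) :
    {f : Function.End (Fin (m + 1)) | PartiallyMonotonic f}.ncard =
      ∑ k ∈ Finset.range (m + 1), m.choose k * m.multichoose k := by
  have hfib := Equiv.sigmaFiberEquiv
    fun f : {f : Fin (m + 1) → Fin (m + 1) // PartiallyMonotonic f} => partialDomain f.1
  rw [← Nat.card_coe_set_eq]
  change Nat.card {f : Fin (m + 1) → Fin (m + 1) // PartiallyMonotonic f} = _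
  rw [← Nat.card_congr hfib, Nat.card_sigma]
  simp_rw [Nat.card_congr (partiallyMonotonicFiberEquiv _), Finset.card_orderHom_fin]
  rw [← Finset.powerset_univ, Finset.sum_powerset_apply_card, Finset.card_univ, Fintype.card_fin]
  simp

theorem ncard_nearlyMonotonicSet (m : ℕ) :
    (NearlyMonotonicSet (m + 1)).ncard =
      (∑ k ∈ Finset.range (m + 1), m.choose k * m.multichoose k) + m := by
  let const : Fin (m + 1) → Function.End (Fin (m + 1)) := fun c _ => c
  have hconst : {f : Function.End (Fin (m + 1)) | ∃ c, f = fun _ => c} = Set.range const := by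
    ext f
    exact ⟨fun ⟨c, hc⟩ => ⟨c, hc.symm⟩, fun ⟨c, hc⟩ => ⟨c, hc.symm⟩⟩
  have hinter : {f : Function.End (Fin (m + 1)) | PartiallyMonotonic f} ∩ Set.range const =
      {const (last m)} := by
    ext f
    refine ⟨fun ⟨hf, c, hc⟩ => ?_, fun hf => ⟨?_, _, hf.symm⟩⟩
    · subst hc
      rw [← (partiallyMonotonic_iff.1 hf).1]
      rfl
    · rw [Set.mem_singleton_iff.1 hf]
      exact partiallyMonotonic_of_monotone monotone_const rfl
  have : Finite (Function.End (Fin (m + 1))) :=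
    inferInstanceAs (Finite (Fin (m + 1) → Fin (m + 1)))
  have hunion := Set.ncard_inter_add_ncard_union
    {f : Function.End (Fin (m + 1)) | PartiallyMonotonic f} (Set.range const)
  rw [hinter, Set.ncard_singleton, ncard_partiallyMonotonic] at hunion
  have hcard : (Set.range const).ncard = m + 1 := by
    have hinj : Function.Injective const := fun c d h => congrFun h 0
    rw [Set.ncard_range_of_injective hinj, Nat.card_fin]
  have hNM : NearlyMonotonicSet (m + 1) =
      {f : Function.End (Fin (m + 1)) | PartiallyMonotonic f} ∪ Set.range const :=
    congrArg _ hconst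
  rw [hNM]
  omega

end Cardinality

/-- For every `n ≥ 2`, the submonoid of transformations of `Q_n = {0,…,n−1}`
generated by the unitary transformations `(q→q+1)` and `(q+1→q)` for `0 ≤ q ≤ n−3`,
the unitary transformations `(q→n−1)` for `0 ≤ q ≤ n−2`, the constant transformation
to `0`, and the identity, equals the set of nearly monotonic transformations of `Q_n`;
moreover this set has cardinality `e(n) + n − 1` where
`e(n) = Σ_{k=0}^{n−1} C(n−1, k)·C(n+k−2, k)`. -/
theorem statement6 (n : ℕ) (hn : 2 ≤ n) :
    (Submonoid.closure
        ({f : Function.End (Fin n) |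
            ∃ p q : Fin n, (q : ℕ) = (p : ℕ) + 1 ∧ (q : ℕ) < n - 1 ∧
              (f = unitaryT p q ∨ f = unitaryT q p)} ∪
         {f : Function.End (Fin n) |
            ∃ p r : Fin n, (p : ℕ) < n - 1 ∧ (r : ℕ) = n - 1 ∧ f = unitaryT p r} ∪
         {fun _ => (⟨0, by omega⟩ : Fin n)}) :
        Set (Function.End (Fin n)))
      = NearlyMonotonicSet n ∧
    Set.ncard (NearlyMonotonicSet n) =
      (∑ k ∈ Finset.range n, Nat.choose (n - 1) k * Nat.choose (n + k - 2) k) + n - 1 := by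
  obtain ⟨m, rfl⟩ : ∃ m, n = m + 1 := ⟨n - 1, by omega⟩
  have : NeZero m := ⟨by omega⟩
  refine ⟨closure_nearlyMonotonicGenerators, ?_⟩
  have hsum : ∀ k, m.choose k * m.multichoose k = (m + 1 - 1).choose k * (m + 1 + k - 2).choose k :=
    fun k => by rw [Nat.multichoose_eq, Nat.add_sub_cancel, show m + 1 + k - 2 = m + k - 1 by omega]
  rw [ncard_nearlyMonotonicSet, Finset.sum_congr rfl fun k _ => hsum k]
  omega
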